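/- Let l ∈ ℝ⁶ have all coordinates l_ij > 0 (with l_ji = l_ij), write c_ij = cosh l_ij and s_ij = sinh l_ij, and for {i,j,k,h} = {1,2,3,4} let b_h = √(2 c_ij c_ik c_jk + c_ij² + c_ik² + c_jk² − 1). For distinct i, j, k set x^i_{jk} = arcosh((c_ij c_ik + c_jk)/(s_ij s_ik)) and φ^i_{kh} = (cosh x^i_{jk} · cosh x^i_{jh} − cosh x^i_{kh})/(sinh x^i_{jk} · sinh x^i_{jh}). Then φ^i_{kh}(l) = (c_ik c_ih + c_jk c_jh + c_ij c_ik c_jh + c_ij c_ih c_jk − s_ij² c_kh)/(b_k b_h). -/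
import Mathlib


/-- The inverse hyperbolic cosine: `arcosh x = log (x + √(x² − 1))`,
satisfying `cosh (arcosh x) = x` for `x ≥ 1`. -/
noncomputable def arcosh (x : ℝ) : ℝ := Real.log (x + Real.sqrt (x ^ 2 - 1))

/-- `x^i_{jk} = arcosh((cosh l_ij cosh l_ik + cosh l_jk)/(sinh l_ij sinh l_ik))`. -/
noncomputable def xv (l : Fin 4 → Fin 4 → ℝ) (i j k : Fin 4) : ℝ :=
  arcosh ((Real.cosh (l i j) * Real.cosh (l i k) + Real.cosh (l j k)) /
    (Real.sinh (l i j) * Real.sinh (l i k)))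

/-- `φ^i_{kh} = (cosh x^i_{jk} cosh x^i_{jh} − cosh x^i_{kh})/(sinh x^i_{jk} sinh x^i_{jh})`,
where `j` is the remaining vertex. -/
noncomputable def Phi (l : Fin 4 → Fin 4 → ℝ) (i j k h : Fin 4) : ℝ :=
  (Real.cosh (xv l i j k) * Real.cosh (xv l i j h) - Real.cosh (xv l i k h)) /
    (Real.sinh (xv l i j k) * Real.sinh (xv l i j h))

/-- `bfun l i j k` is the quantity `b_h = √(2 c_ij c_ik c_jk + c_ij² + c_ik² + c_jk² − 1)`
attached to the vertex `h` whose three opposite vertices are `i, j, k`. -/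
noncomputable def bfun (l : Fin 4 → Fin 4 → ℝ) (i j k : Fin 4) : ℝ :=
  Real.sqrt (2 * Real.cosh (l i j) * Real.cosh (l i k) * Real.cosh (l j k) +
    Real.cosh (l i j) ^ 2 + Real.cosh (l i k) ^ 2 + Real.cosh (l j k) ^ 2 - 1)



lemma cosh_arcosh {y : ℝ} (hy : 1 ≤ y) : Real.cosh (arcosh y) = y := by
  have h1 : (0:ℝ) ≤ y^2 - 1 := by nlinarith
  have hs := Real.sq_sqrt h1
  have hs0 := Real.sqrt_nonneg (y^2-1)
  have ha : 0 < y + Real.sqrt (y^2-1) := by nlinarith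
  rw [arcosh, Real.cosh_eq, Real.exp_log ha, Real.exp_neg, Real.exp_log ha]
  field_simp
  nlinarith [hs]

lemma sinh_arcosh {y : ℝ} (hy : 1 ≤ y) : Real.sinh (arcosh y) = Real.sqrt (y^2-1) := by
  have h1 : (0:ℝ) ≤ y^2 - 1 := by nlinarith
  have hs := Real.sq_sqrt h1
  have hs0 := Real.sqrt_nonneg (y^2-1)
  have ha : 0 < y + Real.sqrt (y^2-1) := by nlinarith
  rw [arcosh, Real.sinh_eq, Real.exp_log ha, Real.exp_neg, Real.exp_log ha]
  field_simp
  nlinarith [hs]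

lemma one_le_y {a b c : ℝ} (ha : 0 < a) (hb : 0 < b) :
    1 ≤ (Real.cosh a * Real.cosh b + Real.cosh c) / (Real.sinh a * Real.sinh b) := by
  have hsa := Real.sinh_pos_iff.2 ha
  have hsb := Real.sinh_pos_iff.2 hb
  rw [le_div_iff₀ (by positivity)]
  have h1 := Real.cosh_sub a b
  have h2 := Real.one_le_cosh (a - b)
  have h3 := Real.one_le_cosh c
  nlinarith

lemma E_pos {a b c : ℝ} (ha : 0 < a) (hb : 0 < b) :
    0 < 2 * Real.cosh a * Real.cosh b * Real.cosh c +
      Real.cosh a ^ 2 + Real.cosh b ^ 2 + Real.cosh c ^ 2 - 1 := by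
  have hsa := Real.sinh_pos_iff.2 ha
  have hsb := Real.sinh_pos_iff.2 hb
  have h1 := Real.cosh_sub a b
  have h2 := Real.one_le_cosh (a - b)
  have h3 := Real.one_le_cosh c
  have h4 := Real.cosh_sq a
  have h5 := Real.cosh_sq b
  have hd := mul_pos hsa hsb
  have hnum : Real.sinh a * Real.sinh b + 2 ≤ Real.cosh a * Real.cosh b + Real.cosh c := by
    linarith
  have hsq : (Real.sinh a * Real.sinh b + 2)^2 ≤ (Real.cosh a * Real.cosh b + Real.cosh c)^2 := by
    nlinarith
  nlinarith

lemma cosh_val {a b c : ℝ} (ha : 0 < a) (hb : 0 < b) :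
    Real.cosh (arcosh ((Real.cosh a * Real.cosh b + Real.cosh c) / (Real.sinh a * Real.sinh b))) =
    (Real.cosh a * Real.cosh b + Real.cosh c) / (Real.sinh a * Real.sinh b) :=
  cosh_arcosh (one_le_y ha hb)

lemma sinh_val {a b c : ℝ} (ha : 0 < a) (hb : 0 < b) :
    Real.sinh (arcosh ((Real.cosh a * Real.cosh b + Real.cosh c) / (Real.sinh a * Real.sinh b))) =
    Real.sqrt (2 * Real.cosh a * Real.cosh b * Real.cosh c +
      Real.cosh a ^ 2 + Real.cosh b ^ 2 + Real.cosh c ^ 2 - 1) / (Real.sinh a * Real.sinh b) := by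
  have hsa := Real.sinh_pos_iff.2 ha
  have hsb := Real.sinh_pos_iff.2 hb
  have hd := mul_pos hsa hsb
  have h4 := Real.cosh_sq a
  have h5 := Real.cosh_sq b
  rw [sinh_arcosh (one_le_y ha hb)]
  have key : ((Real.cosh a * Real.cosh b + Real.cosh c) / (Real.sinh a * Real.sinh b))^2 - 1 =
      (2 * Real.cosh a * Real.cosh b * Real.cosh c +
      Real.cosh a ^ 2 + Real.cosh b ^ 2 + Real.cosh c ^ 2 - 1) / (Real.sinh a * Real.sinh b)^2 := by
    field_simp
    nlinarith [h4, h5]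
  rw [key, Real.sqrt_div (le_of_lt (E_pos ha hb)), Real.sqrt_sq (le_of_lt hd)]


theorem stmt11 (l : Fin 4 → Fin 4 → ℝ) (hsym : ∀ r s, l r s = l s r)
    (hpos : ∀ r s, r ≠ s → 0 < l r s)
    (i j k h : Fin 4) (hij : i ≠ j) (hik : i ≠ k) (hih : i ≠ h)
    (hjk : j ≠ k) (hjh : j ≠ h) (hkh : k ≠ h) :
    Phi l i j k h =
      (Real.cosh (l i k) * Real.cosh (l i h) + Real.cosh (l j k) * Real.cosh (l j h) +
        Real.cosh (l i j) * Real.cosh (l i k) * Real.cosh (l j h) +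
        Real.cosh (l i j) * Real.cosh (l i h) * Real.cosh (l j k) -
        Real.sinh (l i j) ^ 2 * Real.cosh (l k h)) /
      (bfun l i j h * bfun l i j k) := by
  have h1 := hpos i j hij
  have h2 := hpos i k hik
  have h3 := hpos i h hih
  have hs1 := Real.sinh_pos_iff.2 h1
  have hs2 := Real.sinh_pos_iff.2 h2
  have hs3 := Real.sinh_pos_iff.2 h3
  have hBh : 0 < bfun l i j k := Real.sqrt_pos.2 (E_pos h1 h2)
  have hBk : 0 < bfun l i j h := Real.sqrt_pos.2 (E_pos h1 h3)
  rw [Phi, xv, xv, xv, cosh_val h1 h2, cosh_val h1 h3, cosh_val h2 h3,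
    sinh_val h1 h2, sinh_val h1 h3]
  rw [show Real.sqrt (2 * Real.cosh (l i j) * Real.cosh (l i k) * Real.cosh (l j k) +
      Real.cosh (l i j) ^ 2 + Real.cosh (l i k) ^ 2 + Real.cosh (l j k) ^ 2 - 1) = bfun l i j k
      from rfl,
    show Real.sqrt (2 * Real.cosh (l i j) * Real.cosh (l i h) * Real.cosh (l j h) +
      Real.cosh (l i j) ^ 2 + Real.cosh (l i h) ^ 2 + Real.cosh (l j h) ^ 2 - 1) = bfun l i j h
      from rfl]
  have hnum : (Real.cosh (l i j) * Real.cosh (l i k) + Real.cosh (l j k)) *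
      (Real.cosh (l i j) * Real.cosh (l i h) + Real.cosh (l j h)) -
      Real.sinh (l i j) ^ 2 * (Real.cosh (l i k) * Real.cosh (l i h) + Real.cosh (l k h)) =
      (Real.cosh (l i k) * Real.cosh (l i h) + Real.cosh (l j k) * Real.cosh (l j h) +
        Real.cosh (l i j) * Real.cosh (l i k) * Real.cosh (l j h) +
        Real.cosh (l i j) * Real.cosh (l i h) * Real.cosh (l j k) -
        Real.sinh (l i j) ^ 2 * Real.cosh (l k h)) := by
    linear_combination (Real.cosh (l i k) * Real.cosh (l i h)) * Real.cosh_sq (l i j)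
  rw [← hnum]
  field_simp
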